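/- arXiv:2203.05959 — 2 statements merged into one kernel-verified Lean document; each statement's English description precedes it below -/
import Mathlib

section
/- Let p_A and p_Ĉ be trigonometric polynomials of degrees q_A and q_Ĉ, and set q = max(q_A, q_Ĉ). Let f_{A,0}, f_{B,0}, f_{C,0} be trigonometric polynomials with â₀(f_{A,ℓ}) ≠ 0 at every level, let (α_ℓ) be real numbers, and define recursively, with ψ(g)(θ) = (1/2)[g(θ/2) + g(θ/2+π)]: f_{A,ℓ+1} = ψ(|p_A|²·f_{A,ℓ}); f_{B,ℓ+1} = ψ( p̄_Ĉ · f_{B,ℓ} · (1 − (α_ℓ/â₀(f_{A,ℓ}))f_{A,ℓ}) · p_A ); f_{Ĉ,ℓ} = f_{C,ℓ} + (α_ℓ|f_{B,ℓ}|²/â₀(f_{A,ℓ}))·(2 − (α_ℓ/â₀(f_{A,ℓ}))f_{A,ℓ}); f_{C,ℓ+1} = ψ(|p_Ĉ|²·f_{Ĉ,ℓ}). Then for all sufficiently large ℓ: (1) deg f_{B,ℓ} ≤ max(2·deg f_{B,0}, 4q), and (2) deg f_{C,ℓ} ≤ max(4·deg f_{B,0}, 6q, 2·deg f_{C,0}).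 -/
open Matrix Filter Set
open scoped Real Topology ComplexConjugate ComplexOrder

noncomputable section

/-- The `j`-th Fourier coefficient of `f`. -/
def fcoeff (f : ℝ → ℂ) (j : ℤ) : ℂ :=
  (1 / (2 * Real.pi)) * ∫ θ in (-Real.pi)..Real.pi, f θ * Complex.exp (-Complex.I * (j : ℂ) * (θ : ℂ))

/-- The matrix `Z_n^j`, whose `(i,l)` entry is `1` if `i - l ≡ j (mod n)` and `0` otherwise. -/
def Zmat (n : ℕ) (j : ℤ) : Matrix (Fin n) (Fin n) ℂ :=
  Matrix.of fun i l => if ((i : ℤ) - (l : ℤ) - j) % (n : ℤ) = 0 then 1 else 0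

/-- The circulant matrix `C_n(f)` generated by `f`. -/
def circMat (n : ℕ) (f : ℝ → ℂ) : Matrix (Fin n) (Fin n) ℂ :=
  ∑ j ∈ Finset.Ioo (-(n : ℤ)) (n : ℤ), fcoeff f j • Zmat n j

/-- The down-sampling matrix `K_n` (with `k = n/2` rows). -/
def Kmat (k n : ℕ) : Matrix (Fin k) (Fin n) ℂ :=
  Matrix.of fun i j => if (j : ℕ) = 2 * (i : ℕ) then 1 else 0

/-- `f` is a trigonometric polynomial of degree (strictly) less than `n`. -/
def IsTrigPolyDegLT (n : ℕ) (f : ℝ → ℂ) : Prop :=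
  ∃ c : ℤ → ℂ, ∀ θ : ℝ,
    f θ = ∑ j ∈ Finset.Ioo (-(n : ℤ)) (n : ℤ), c j * Complex.exp (Complex.I * (j : ℂ) * (θ : ℂ))

/-- `f` is a trigonometric polynomial of degree at most `z`. -/
def IsTrigPolyDeg (z : ℕ) (f : ℝ → ℂ) : Prop :=
  ∃ c : ℤ → ℂ, ∀ θ : ℝ,
    f θ = ∑ j ∈ Finset.Icc (-(z : ℤ)) (z : ℤ), c j * Complex.exp (Complex.I * (j : ℂ) * (θ : ℂ))

/-- The zeroth Fourier coefficient of a real function. -/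
def a0 (f : ℝ → ℝ) : ℝ := (1 / (2 * Real.pi)) * ∫ θ in (-Real.pi)..Real.pi, f θ

/-- The supremum norm of a real function on `[0, 2π)`. -/
def supnorm (f : ℝ → ℝ) : ℝ := sSup ((fun θ => |f θ|) '' Set.Ico 0 (2 * Real.pi))

/-- The two-grid iteration matrix with one step of damped Jacobi post-smoothing. -/
def TGMmat {N K : Type*} [Fintype N] [DecidableEq N] [Fintype K] [DecidableEq K]
    (X : Matrix N N ℂ) (P : Matrix N K ℂ) (ω : ℝ) : Matrix N N ℂ :=
  (1 - (ω : ℂ) • ((Matrix.diagonal fun i => X i i)⁻¹ * X)) *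
    (1 - P * (Pᴴ * X * P)⁻¹ * Pᴴ * X)

/-- The coarse symbol operator `ψ`. -/
def psiC (g : ℝ → ℂ) : ℝ → ℂ := fun θ => (1 / 2) * (g (θ / 2) + g (θ / 2 + Real.pi))

/-!
The coarse-symbol map `ψ` keeps only the even frequencies of a trigonometric polynomial and halves
them, so it maps degree `≤ z` to degree `≤ z / 2`, while products add degrees. Hence the degrees
`a, b, c` of `f_A, f_B, f_C` obey `a' ≤ (2 q_A + a) / 2`, `b' ≤ (q_C + b + a + q_A) / 2` and
`c' ≤ (2 q_C + max c (2 b + a)) / 2`. A recursion `u' ≤ u / 2 + K` drops strictly while `u > 2 K`,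
so `a` is eventually `≤ 2 q`, then `b ≤ 4 q`, and then `c ≤ 6 q`.
-/

abbrev trigMonomial (j : ℤ) (θ : ℝ) : ℂ := Complex.exp (Complex.I * (j : ℂ) * (θ : ℂ))

lemma trigMonomial_mul (j k : ℤ) (θ : ℝ) :
    trigMonomial j θ * trigMonomial k θ = trigMonomial (j + k) θ := by
  simp only [trigMonomial, ← Complex.exp_add]; push_cast; ring_nf

lemma conj_trigMonomial (j : ℤ) (θ : ℝ) : conj (trigMonomial j θ) = trigMonomial (-j) θ := by
  simp only [trigMonomial, ← Complex.exp_conj, map_mul, Complex.conj_I, Complex.conj_ofReal,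
    map_intCast]
  push_cast; ring_nf

lemma trigMonomial_two_mul_half (m : ℤ) (θ : ℝ) :
    trigMonomial (2 * m) (θ / 2) = trigMonomial m θ := by
  simp only [trigMonomial]; push_cast; ring_nf

lemma trigMonomial_add_pi (j : ℤ) (θ : ℝ) :
    trigMonomial j (θ + π) = trigMonomial j θ * (-1) ^ j := by
  simp only [trigMonomial, ← Complex.exp_pi_mul_I, ← Complex.exp_int_mul, ← Complex.exp_add]
  push_cast; ring_nf

namespace IsTrigPolyDeg

variable {z w : ℕ} {f g : ℝ → ℂ}

lemma mono (hf : IsTrigPolyDeg z f) (hzw : z ≤ w) : IsTrigPolyDeg w f := by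
  classical
  obtain ⟨c, hc⟩ := hf
  refine ⟨fun j => if j ∈ Finset.Icc (-(z : ℤ)) z then c j else 0, fun θ => ?_⟩
  have hsub : Finset.Icc (-(z : ℤ)) z ⊆ Finset.Icc (-(w : ℤ)) w :=
    Finset.Icc_subset_Icc (by omega) (by omega)
  rw [hc, ← Finset.sum_subset hsub fun j _ hj => by simp [hj]]
  exact Finset.sum_congr rfl fun j hj => by simp [hj]

lemma const (z : ℕ) (k : ℂ) : IsTrigPolyDeg z fun _ => k := by
  refine ⟨fun j => if j = 0 then k else 0, fun θ => ?_⟩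
  simp [ite_mul, Finset.sum_ite_eq']

lemma const_mul (k : ℂ) (hf : IsTrigPolyDeg z f) : IsTrigPolyDeg z fun θ => k * f θ := by
  obtain ⟨c, hc⟩ := hf
  exact ⟨fun j => k * c j, fun θ => by simp only [hc, Finset.mul_sum, mul_assoc]⟩

lemma add (hf : IsTrigPolyDeg z f) (hg : IsTrigPolyDeg z g) :
    IsTrigPolyDeg z fun θ => f θ + g θ := by
  obtain ⟨c, hc⟩ := hf
  obtain ⟨d, hd⟩ := hg
  exact ⟨c + d, fun θ => by simp only [hc, hd, ← Finset.sum_add_distrib, Pi.add_apply, add_mul]⟩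

lemma sub (hf : IsTrigPolyDeg z f) (hg : IsTrigPolyDeg z g) :
    IsTrigPolyDeg z fun θ => f θ - g θ := by
  simpa only [neg_one_mul, ← sub_eq_add_neg] using hf.add (hg.const_mul (-1))

lemma mul (hf : IsTrigPolyDeg z f) (hg : IsTrigPolyDeg w g) :
    IsTrigPolyDeg (z + w) fun θ => f θ * g θ := by
  classical
  obtain ⟨c, hc⟩ := hf
  obtain ⟨d, hd⟩ := hg
  let S := Finset.Icc (-(z : ℤ)) z ×ˢ Finset.Icc (-(w : ℤ)) w
  refine ⟨fun m => ∑ p ∈ S with p.1 + p.2 = m, c p.1 * d p.2, fun θ => ?_⟩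
  beta_reduce
  rw [hc, hd, Finset.sum_mul_sum, ← Finset.sum_product',
    ← Finset.sum_fiberwise_of_maps_to (g := fun p : ℤ × ℤ => p.1 + p.2)
      (t := Finset.Icc (-((z + w : ℕ) : ℤ)) ((z + w : ℕ) : ℤ))
      (fun p hp => by simp only [Finset.mem_product, Finset.mem_Icc] at hp ⊢; omega)]
  refine Finset.sum_congr rfl fun m _ => ?_
  rw [Finset.sum_mul]
  refine Finset.sum_congr rfl fun p hp => ?_
  rw [mul_mul_mul_comm, trigMonomial_mul, (Finset.mem_filter.mp hp).2]

lemma star (hf : IsTrigPolyDeg z f) : IsTrigPolyDeg z fun θ => conj (f θ) := by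
  obtain ⟨c, hc⟩ := hf
  refine ⟨fun j => conj (c (-j)), fun θ => ?_⟩
  beta_reduce
  rw [hc, map_sum]
  refine Finset.sum_nbij' (fun j => -j) (fun j => -j) ?_ ?_ (fun _ _ => neg_neg _)
    (fun _ _ => neg_neg _) fun j _ => ?_
  · intro j hj; simp only [Finset.mem_Icc] at hj ⊢; omega
  · intro j hj; simp only [Finset.mem_Icc] at hj ⊢; omega
  · rw [map_mul, conj_trigMonomial, neg_neg]

lemma normSq (hf : IsTrigPolyDeg z f) : IsTrigPolyDeg (z + z) fun θ => ((‖f θ‖ ^ 2 : ℝ) : ℂ) := by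
  simpa only [Complex.mul_conj, Complex.sq_norm] using hf.mul hf.star

lemma psiC (hf : IsTrigPolyDeg z f) : IsTrigPolyDeg (z / 2) (_root_.psiC f) := by
  classical
  obtain ⟨c, hc⟩ := hf
  refine ⟨fun m => c (2 * m), fun θ => ?_⟩
  have hmodes : _root_.psiC f θ = ∑ j ∈ Finset.Icc (-(z : ℤ)) z,
      c j * ((1 + (-1) ^ j) / 2) * trigMonomial j (θ / 2) := by
    simp only [_root_.psiC, hc, trigMonomial_add_pi, ← Finset.sum_add_distrib, Finset.mul_sum]
    exact Finset.sum_congr rfl fun j _ => by ring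
  have heven_of_ne : ∀ j ∈ Finset.Icc (-(z : ℤ)) z,
      c j * ((1 + (-1) ^ j) / 2) * trigMonomial j (θ / 2) ≠ 0 → Even j := by
    intro j _ hj
    by_contra hev
    rw [(Int.not_even_iff_odd.mp hev).neg_one_zpow] at hj
    simp at hj
  have hevens : {j ∈ Finset.Icc (-(z : ℤ)) z | Even j}
      = (Finset.Icc (-((z / 2 : ℕ) : ℤ)) ((z / 2 : ℕ) : ℤ)).image (2 * ·) := by
    ext j
    simp only [Finset.mem_filter, Finset.mem_Icc, Finset.mem_image, Int.even_iff]
    constructor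
    · rintro ⟨_, _⟩
      exact ⟨j / 2, by omega, by omega⟩
    · rintro ⟨m, _, rfl⟩
      omega
  rw [hmodes, ← Finset.sum_filter_of_ne heven_of_ne, hevens,
    Finset.sum_image fun _ _ _ _ h => by omega]
  refine Finset.sum_congr rfl fun m _ => ?_
  rw [trigMonomial_two_mul_half, (even_two_mul m).neg_one_zpow]
  norm_num

end IsTrigPolyDeg

section CoarseSymbols

variable {qA qC a b c : ℕ} {pA pC fA fB fC : ℝ → ℂ}

lemma IsTrigPolyDeg.psiC_coarseB (β : ℂ) (hpA : IsTrigPolyDeg qA pA)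
    (hpC : IsTrigPolyDeg qC pC) (hA : IsTrigPolyDeg a fA) (hB : IsTrigPolyDeg b fB) :
    IsTrigPolyDeg ((qC + b + a + qA) / 2)
      (_root_.psiC fun θ => conj (pC θ) * fB θ * (1 - β * fA θ) * pA θ) :=
  ((hpC.star.mul hB).mul ((IsTrigPolyDeg.const a 1).sub (hA.const_mul β))
    |>.mul hpA).psiC

lemma IsTrigPolyDeg.psiC_coarseC (γ δ β : ℂ) (hpC : IsTrigPolyDeg qC pC)
    (hA : IsTrigPolyDeg a fA) (hB : IsTrigPolyDeg b fB) (hC : IsTrigPolyDeg c fC) :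
    IsTrigPolyDeg ((qC + qC + max c (b + b + a)) / 2)
      (_root_.psiC fun θ => ((‖pC θ‖ ^ 2 : ℝ) : ℂ) *
        (fC θ + γ * ((‖fB θ‖ ^ 2 : ℝ) : ℂ) / δ * (2 - β * fA θ))) := by
  have hcorr : IsTrigPolyDeg (b + b + a)
      fun θ => γ * ((‖fB θ‖ ^ 2 : ℝ) : ℂ) / δ * (2 - β * fA θ) := by
    simpa only [div_eq_mul_inv, mul_comm _ δ⁻¹, ← mul_assoc] using
      ((hB.normSq.const_mul (δ⁻¹ * γ)).mul ((IsTrigPolyDeg.const a 2).sub (hA.const_mul β)))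
  exact (hpC.normSq.mul ((hC.mono (le_max_left _ _)).add (hcorr.mono (le_max_right _ _)))).psiC

end CoarseSymbols

lemma eventually_le_of_eventually_succ_le_half_add {u : ℕ → ℕ} {K M : ℕ} (hKM : 2 * K ≤ M)
    (h : ∀ᶠ n in atTop, u (n + 1) ≤ max (u n / 2 + K) M) : ∀ᶠ n in atTop, u n ≤ M := by
  obtain ⟨L, hL⟩ := eventually_atTop.mp h
  have hdrop : ∀ n, u (L + n) ≤ max M (u L - n) := by
    intro n
    induction n with
    | zero => simp
    | succ n ih => have := hL (L + n) (by omega); rw [← add_assoc]; omega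
  refine eventually_atTop.mpr ⟨L + u L, fun n hn => ?_⟩
  have := hdrop (n - L)
  rw [Nat.add_sub_cancel' (by omega)] at this
  omega

section DegreeBounds

variable (qA qC zA zB zC : ℕ)

def degBoundA : ℕ → ℕ
  | 0 => zA
  | n + 1 => (qA + qA + degBoundA n) / 2

def degBoundB : ℕ → ℕ
  | 0 => zB
  | n + 1 => (qC + degBoundB n + degBoundA qA zA n + qA) / 2

def degBoundC : ℕ → ℕ
  | 0 => zC
  | n + 1 => (qC + qC + max (degBoundC n) (degBoundB qA qC zA zB n + degBoundB qA qC zA zB n +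
      degBoundA qA zA n)) / 2

lemma eventually_degBoundA_le : ∀ᶠ n in atTop, degBoundA qA zA n ≤ 2 * qA :=
  eventually_le_of_eventually_succ_le_half_add le_rfl
    (Eventually.of_forall fun n => by simp only [degBoundA]; omega)

lemma eventually_degBoundB_le : ∀ᶠ n in atTop, degBoundB qA qC zA zB n ≤ 4 * max qA qC :=
  eventually_le_of_eventually_succ_le_half_add (K := 2 * max qA qC) (by omega) <|
    (eventually_degBoundA_le qA zA).mono fun n hA => by simp only [degBoundB]; omega

lemma eventually_degBoundC_le :
    ∀ᶠ n in atTop, degBoundC qA qC zA zB zC n ≤ 6 * max qA qC :=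
  eventually_le_of_eventually_succ_le_half_add (K := max qA qC) (by omega) <|
    ((eventually_degBoundA_le qA zA).and (eventually_degBoundB_le qA qC zA zB)).mono
      fun n ⟨hA, hB⟩ => by simp only [degBoundC]; omega

end DegreeBounds

theorem stmt9_general (qA qC zA0 zB0 zC0 : ℕ) (pA pC : ℝ → ℂ)
    (hpA : IsTrigPolyDeg qA pA) (hpC : IsTrigPolyDeg qC pC)
    (fA fB fC : ℕ → ℝ → ℂ) (α : ℕ → ℝ)
    (hA0 : IsTrigPolyDeg zA0 (fA 0))
    (hB0 : IsTrigPolyDeg zB0 (fB 0))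
    (hC0 : IsTrigPolyDeg zC0 (fC 0))
    (hArec : ∀ ℓ : ℕ, fA (ℓ + 1) = psiC (fun θ => ((‖pA θ‖ ^ 2 : ℝ) : ℂ) * fA ℓ θ))
    (hBrec : ∀ ℓ : ℕ, fB (ℓ + 1) = psiC (fun θ =>
      (starRingEnd ℂ) (pC θ) * fB ℓ θ *
        (1 - ((α ℓ : ℝ) : ℂ) / fcoeff (fA ℓ) 0 * fA ℓ θ) * pA θ))
    (hCrec : ∀ ℓ : ℕ, fC (ℓ + 1) = psiC (fun θ => ((‖pC θ‖ ^ 2 : ℝ) : ℂ) *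
      (fC ℓ θ + ((α ℓ : ℝ) : ℂ) * ((‖fB ℓ θ‖ ^ 2 : ℝ) : ℂ) / fcoeff (fA ℓ) 0 *
        (2 - ((α ℓ : ℝ) : ℂ) / fcoeff (fA ℓ) 0 * fA ℓ θ)))) :
    ∃ L : ℕ, ∀ ℓ ≥ L,
      IsTrigPolyDeg (max (2 * zB0) (4 * max qA qC)) (fB ℓ) ∧
      IsTrigPolyDeg (max (max (4 * zB0) (6 * max qA qC)) (2 * zC0)) (fC ℓ) := by
  have hdeg : ∀ ℓ, IsTrigPolyDeg (degBoundA qA zA0 ℓ) (fA ℓ) ∧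
      IsTrigPolyDeg (degBoundB qA qC zA0 zB0 ℓ) (fB ℓ) ∧
      IsTrigPolyDeg (degBoundC qA qC zA0 zB0 zC0 ℓ) (fC ℓ) := by
    intro ℓ
    induction ℓ with
    | zero => exact ⟨hA0, hB0, hC0⟩
    | succ n ih =>
      obtain ⟨hA, hB, hC⟩ := ih
      rw [hArec, hBrec, hCrec, degBoundA, degBoundB, degBoundC]
      exact ⟨(hpA.normSq.mul hA).psiC, hpA.psiC_coarseB _ hpC hA hB,
        hpC.psiC_coarseC _ _ _ hA hB hC⟩
  obtain ⟨L, hL⟩ := eventually_atTop.mp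
    ((eventually_degBoundB_le qA qC zA0 zB0).and (eventually_degBoundC_le qA qC zA0 zB0 zC0))
  refine ⟨L, fun ℓ hℓ => ⟨(hdeg ℓ).2.1.mono ?_, (hdeg ℓ).2.2.mono ?_⟩⟩
  · exact (hL ℓ hℓ).1.trans (le_max_right _ _)
  · exact (hL ℓ hℓ).2.trans ((le_max_right _ _).trans (le_max_left _ _))

/-- eventual bounds on the degrees of the coarse symbols `f_{B,ℓ}`, `f_{C,ℓ}`. -/
theorem stmt9 (qA qC zA0 zB0 zC0 : ℕ) (pA pC : ℝ → ℂ)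
    (hpA : IsTrigPolyDeg qA pA) (hpC : IsTrigPolyDeg qC pC)
    (fA fB fC : ℕ → ℝ → ℂ) (α : ℕ → ℝ)
    (hA0 : IsTrigPolyDeg zA0 (fA 0))
    (hB0 : IsTrigPolyDeg zB0 (fB 0))
    (hC0 : IsTrigPolyDeg zC0 (fC 0))
    (ha0 : ∀ ℓ : ℕ, fcoeff (fA ℓ) 0 ≠ 0)
    (hArec : ∀ ℓ : ℕ, fA (ℓ + 1) = psiC (fun θ => ((‖pA θ‖ ^ 2 : ℝ) : ℂ) * fA ℓ θ))
    (hBrec : ∀ ℓ : ℕ, fB (ℓ + 1) = psiC (fun θ =>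
      (starRingEnd ℂ) (pC θ) * fB ℓ θ *
        (1 - ((α ℓ : ℝ) : ℂ) / fcoeff (fA ℓ) 0 * fA ℓ θ) * pA θ))
    (hCrec : ∀ ℓ : ℕ, fC (ℓ + 1) = psiC (fun θ => ((‖pC θ‖ ^ 2 : ℝ) : ℂ) *
      (fC ℓ θ + ((α ℓ : ℝ) : ℂ) * ((‖fB ℓ θ‖ ^ 2 : ℝ) : ℂ) / fcoeff (fA ℓ) 0 *
        (2 - ((α ℓ : ℝ) : ℂ) / fcoeff (fA ℓ) 0 * fA ℓ θ)))) :
    ∃ L : ℕ, ∀ ℓ ≥ L,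
      IsTrigPolyDeg (max (2 * zB0) (4 * max qA qC)) (fB ℓ) ∧
      IsTrigPolyDeg (max (max (4 * zB0) (6 * max qA qC)) (2 * zC0)) (fC ℓ) :=
  stmt9_general qA qC zA0 zB0 zC0 pA pC hpA hpC fA fB fC α hA0 hB0 hC0 hArec hBrec hCrec
end
end

section
/- Let f_A be a real nonnegative trigonometric polynomial with f_A(0) = 0 and f_A(θ) > 0 for θ ∈ (0,2π); let f_C be a real nonnegative trigonometric polynomial; let f_B be a trigonometric polynomial with f_B(0) = 0, f_B(θ) ≠ 0 for θ ∈ (0,2π), and limsup_{θ→0} |f_B(θ)|²/f_A(θ) < ∞; let 0 < α < 2â₀(f_A)/‖f_A‖_∞. Let p_A and p_Ĉ be trigonometric polynomials with |p_A(θ)|²+|p_A(θ+π)|² > 0 and |p_Ĉ(θ)|²+|p_Ĉ(θ+π)|² > 0 for all θ, and limsup_{θ→0} |p_A(θ+π)|²/f_A(θ) < ∞. With ψ(g)(θ) = (1/2)[g(θ/2) + g(θ/2+π)], define f_A' = ψ(|p_A|²f_A), f_Ĉ = f_C + (α|f_B|²/â₀(f_A))(2 − (α/â₀(f_A))f_A),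 f_C' = ψ(|p_Ĉ|²f_Ĉ), f_B' = ψ(p̄_Ĉ·f_B·(1 − (α/â₀(f_A))f_A)·p_A), and, for any 0 < α' < 2â₀(f_A')/‖f_A'‖_∞, f_Ĉ' = f_C' + (α'|f_B'|²/â₀(f_A'))(2 − (α'/â₀(f_A'))f_A'). Then: f_A'(0) = 0 and f_A'(θ) > 0 for all θ ∈ (0,2π); limsup_{θ→0} f_A(θ)/f_A'(θ) is finite and strictly positive; f_C'(θ) ≥ 0 for all θ; and limsup_{θ→0} f_Ĉ(θ)/f_Ĉ'(θ) < ∞. -/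
/-
Near `θ = 0` all symbols are compared up to constant factors (`=Θ` along `𝓝[≠] 0`).
The bound on `|p_A(θ + π)|² / f_A(θ)` forces `p_A(π) = 0` and `|p_A(θ/2 + π)|² = O(f_A(θ/2))`, so
`f_A'(θ) = Θ(f_A(θ/2))` because `p_A(0) ≠ 0`. An analytic function vanishing to finite order `n`
at `0` satisfies `f(θ) / f(θ/2) → 2ⁿ`, hence `f_A(θ/2) = Θ(f_A(θ))`, which gives the finite
positive limsup. The same comparison gives `f_Ĉ = O(f_C')` when `p_Ĉ(0) ≠ 0`; otherwise
`p_Ĉ(π) ≠ 0`, so `f_C'(0) > 0` and continuity suffices. Nonnegativity everywhere comes from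
`2 - (α / â₀(f)) f > 0`, a consequence of `α < 2 â₀(f) / ‖f‖_∞`.
-/

open Matrix Filter Set
open scoped Real Topology ComplexConjugate ComplexOrder

noncomputable section

open Asymptotics

namespace IsTrigPolyDeg

variable {z : ℕ}

theorem analyticAt {f : ℝ → ℂ} (hf : IsTrigPolyDeg z f) (x : ℝ) : AnalyticAt ℝ f x := by
  obtain ⟨c, hc⟩ := hf
  rw [show f = _ from funext hc]
  refine Finset.analyticAt_fun_sum _ fun j _ => analyticAt_const.mul ?_
  exact analyticAt_cexp.restrictScalars.comp
    (analyticAt_const.mul (Complex.ofRealCLM.analyticAt x))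

theorem continuous {f : ℝ → ℂ} (hf : IsTrigPolyDeg z f) : Continuous f :=
  AnalyticOnNhd.continuous fun x _ => hf.analyticAt x

theorem periodic {f : ℝ → ℂ} (hf : IsTrigPolyDeg z f) : Function.Periodic f (2 * π) := by
  obtain ⟨c, hc⟩ := hf
  intro θ
  simp only [hc, Complex.ofReal_add, mul_add, Complex.exp_add]
  refine Finset.sum_congr rfl fun j _ => ?_
  have hj : Complex.exp (Complex.I * j * (2 * π : ℝ)) = 1 := by
    rw [← Complex.exp_int_mul_two_pi_mul_I j]
    push_cast
    ring_nf
  rw [hj, mul_one]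

theorem analyticAt_re {f : ℝ → ℂ} (hf : IsTrigPolyDeg z f) (x : ℝ) :
    AnalyticAt ℝ (fun θ => (f θ).re) x :=
  (Complex.reCLM.analyticAt _).comp (hf.analyticAt x)

end IsTrigPolyDeg

theorem AnalyticAt.norm_sq {g : ℝ → ℂ} {x : ℝ} (hg : AnalyticAt ℝ g x) :
    AnalyticAt ℝ (fun θ => ‖g θ‖ ^ 2) x := by
  have hre : AnalyticAt ℝ (fun θ => (g θ).re) x := (Complex.reCLM.analyticAt _).comp hg
  have him : AnalyticAt ℝ (fun θ => (g θ).im) x := (Complex.imCLM.analyticAt _).comp hg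
  simpa only [Complex.sq_norm, Complex.normSq_apply] using
    (hre.fun_mul hre).fun_add (him.fun_mul him)

theorem tendsto_div_const_nhdsNE_zero {𝕜 : Type*} [NormedField 𝕜] {c : 𝕜} (hc : c ≠ 0) :
    Tendsto (fun θ : 𝕜 => θ / c) (𝓝[≠] 0) (𝓝[≠] 0) :=
  tendsto_nhdsWithin_of_tendsto_nhds_of_eventually_within _
    (((continuous_id.div_const c).tendsto' 0 0 (zero_div c)).mono_left nhdsWithin_le_nhds)
    (eventually_nhdsWithin_of_forall fun _ hθ => div_ne_zero hθ hc)

/-- If `f` vanishes to order `n` at `0`, then `f θ / f (θ / c) → cⁿ`. -/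
theorem AnalyticAt.isTheta_comp_div {f : ℝ → ℝ} (hf : AnalyticAt ℝ f 0)
    (hf0 : ∃ᶠ θ in 𝓝[≠] 0, f θ ≠ 0) {c : ℝ} (hc : c ≠ 0) :
    f =Θ[𝓝[≠] 0] fun θ => f (θ / c) := by
  have hord : analyticOrderAt f 0 ≠ ⊤ := by
    rw [Ne, analyticOrderAt_eq_top]
    intro h
    obtain ⟨θ, hθ, h0⟩ := (hf0.and_eventually (nhdsWithin_le_nhds h)).exists
    exact hθ h0
  lift analyticOrderAt f 0 to ℕ using hord with n hn
  obtain ⟨u, hu, hu0, hfu⟩ := hf.analyticOrderAt_eq_natCast.mp hn.symm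
  have hdiv : Tendsto (fun θ : ℝ => θ / c) (𝓝 0) (𝓝 0) :=
    (continuous_id.div_const c).tendsto' 0 0 (zero_div c)
  have hlim : Tendsto (fun θ => (c ^ n)⁻¹ * (u (θ / c) / u θ)) (𝓝[≠] 0) (𝓝 (c ^ n)⁻¹) := by
    have := ((hu.continuousAt.tendsto.comp hdiv).div hu.continuousAt.tendsto hu0).const_mul
      (c ^ n)⁻¹
    rw [div_self hu0, mul_one] at this
    exact this.mono_left nhdsWithin_le_nhds
  refine isTheta_of_div_tendsto_nhds_ne_zero (hlim.congr' ?_) (by simp [hc])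
  filter_upwards [nhdsWithin_le_nhds hfu, nhdsWithin_le_nhds (hdiv.eventually hfu),
    self_mem_nhdsWithin] with θ hθ hθc (hθ0 : θ ≠ 0)
  simp only [hθ, hθc, sub_zero, smul_eq_mul, div_pow]
  field_simp

theorem Function.Periodic.eventually_nhdsNE_zero {β : Type*} {f : ℝ → β} {c : ℝ}
    (hf : Function.Periodic f c) (hc : 0 < c) {P : β → Prop} (h : ∀ θ ∈ Ioo 0 c, P (f θ)) :
    ∀ᶠ θ in 𝓝[≠] 0, P (f θ) := by
  filter_upwards [nhdsWithin_le_nhds (Ioo_mem_nhds (neg_neg_of_pos hc) hc), self_mem_nhdsWithin]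
    with θ hθ (hθ0 : θ ≠ 0)
  rcases hθ0.lt_or_gt with hneg | hpos
  · rw [← hf θ]
    exact h _ ⟨by linarith [hθ.1], by linarith⟩
  · exact h θ ⟨hpos, hθ.2⟩

section Asymptotics

variable {α : Type*} {l : Filter α} {f g : α → ℝ}

theorem isBigO_of_isBoundedUnder_le_div (hf : ∀ᶠ x in l, 0 ≤ f x) (hg : ∀ᶠ x in l, 0 < g x)
    (h : IsBoundedUnder (· ≤ ·) l fun x => f x / g x) : f =O[l] g := by
  refine (isBigO_iff_div_isBoundedUnder (hg.mono fun x hx h0 => absurd h0 hx.ne')).2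
    (h.mono_le ?_)
  filter_upwards [hf, hg] with x hfx hgx
  exact (Real.norm_of_nonneg (div_nonneg hfx hgx.le)).le

theorem isBoundedUnder_le_div_of_isBigO (h : f =O[l] g) :
    IsBoundedUnder (· ≤ ·) l fun x => f x / g x :=
  (div_isBoundedUnder_of_isBigO h).mono_le (.of_forall fun _ => Real.le_norm_self _)

theorem isBoundedUnder_le_div_of_isBigO_of_le {k : α → ℝ} (h : f =O[l] g) (hg : ∀ x, 0 ≤ g x)
    (hgk : ∀ x, g x ≤ k x) : IsBoundedUnder (· ≤ ·) l fun x => f x / k x :=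
  isBoundedUnder_le_div_of_isBigO <| h.trans_le fun x => by
    rw [Real.norm_of_nonneg (hg x), Real.norm_of_nonneg ((hg x).trans (hgk x))]
    exact hgk x

theorem exists_pos_limsup_div_of_isTheta [l.NeBot] (hf : ∀ᶠ x in l, 0 ≤ f x)
    (hg : ∀ᶠ x in l, 0 < g x) (h : f =Θ[l] g) :
    ∃ c : ℝ, 0 < c ∧ limsup (fun x => f x / g x) l = c ∧
      IsBoundedUnder (· ≤ ·) l fun x => f x / g x := by
  have hbdd := isBoundedUnder_le_div_of_isBigO h.isBigO
  obtain ⟨C, hC, hgf⟩ := h.isBigO_symm.exists_pos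
  refine ⟨_, lt_of_lt_of_le (inv_pos.2 hC) (le_limsup_of_frequently_le ?_ hbdd), rfl, hbdd⟩
  refine Eventually.frequently ?_
  filter_upwards [hgf.bound, hf, hg] with x hx hfx hgx
  rw [Real.norm_of_nonneg hgx.le, Real.norm_of_nonneg hfx] at hx
  rw [le_div_iff₀ hgx, inv_mul_le_iff₀ hC]
  exact hx

end Asymptotics

theorem ContinuousAt.eq_zero_of_isBigO {α E F : Type*} [TopologicalSpace α] [NormedAddCommGroup E]
    [NormedAddCommGroup F] {f : α → E} {g : α → F} {x : α} [(𝓝[≠] x).NeBot] (hf : ContinuousAt f x)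
    (hg : ContinuousAt g x) (hgx : g x = 0) (h : f =O[𝓝[≠] x] g) : f x = 0 :=
  tendsto_nhds_unique (hf.tendsto.mono_left nhdsWithin_le_nhds)
    (h.trans_tendsto (hgx ▸ hg.tendsto.mono_left nhdsWithin_le_nhds))

theorem ContinuousAt.isBigO_of_ne_zero {α 𝕜 : Type*} [TopologicalSpace α] [NormedField 𝕜]
    {f g : α → 𝕜} {x : α} (hf : ContinuousAt f x)
    (hg : ContinuousAt g x) (hgx : g x ≠ 0) : f =O[𝓝 x] g :=
  isBigO_of_div_tendsto_nhds ((hg.eventually_ne hgx).mono fun _ h h0 => absurd h0 h) _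
    (hf.div hg hgx).tendsto

theorem supnorm_nonneg (f : ℝ → ℝ) : 0 ≤ supnorm f :=
  Real.sSup_nonneg (by rintro _ ⟨θ, -, rfl⟩; exact abs_nonneg _)

theorem abs_le_supnorm {f : ℝ → ℝ} (hc : Continuous f) (hp : Function.Periodic f (2 * π))
    (θ : ℝ) : |f θ| ≤ supnorm f := by
  obtain ⟨y, hy, hfy⟩ := hp.exists_mem_Ico₀ Real.two_pi_pos θ
  have hbdd : BddAbove ((fun θ => |f θ|) '' Ico 0 (2 * π)) :=
    ((isCompact_Icc.image hc.abs).bddAbove).mono (image_mono Ico_subset_Icc_self)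
  rw [hfy]
  exact le_csSup hbdd ⟨y, hy, rfl⟩

-- `supnorm f ≥ 0`, so the hypothesis on `α` rules out the junk value `2 * a0 f / 0 = 0`.
theorem a0_pos_and_supnorm_pos {f : ℝ → ℝ} {α : ℝ} (hα0 : 0 < α)
    (hα : α < 2 * a0 f / supnorm f) : 0 < a0 f ∧ 0 < supnorm f := by
  rcases div_pos_iff.1 (hα0.trans hα) with ⟨ha, hS⟩ | ⟨-, hS⟩
  · exact ⟨by linarith, hS⟩
  · exact absurd hS (supnorm_nonneg f).not_gt

theorem two_sub_div_a0_mul_pos {f : ℝ → ℝ} {α : ℝ} (hc : Continuous f)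
    (hp : Function.Periodic f (2 * π)) (hα0 : 0 < α) (hα : α < 2 * a0 f / supnorm f) (θ : ℝ) :
    0 < 2 - α / a0 f * f θ := by
  obtain ⟨ha, hS⟩ := a0_pos_and_supnorm_pos hα0 hα
  have hαS : α / a0 f * supnorm f < 2 := by
    rw [div_mul_eq_mul_div, div_lt_iff₀ ha]
    exact (lt_div_iff₀ hS).1 hα
  have hθ : α / a0 f * f θ ≤ α / a0 f * supnorm f :=
    mul_le_mul_of_nonneg_left ((le_abs_self _).trans (abs_le_supnorm hc hp θ)) (by positivity)
  linarith

/-- `hatSymbol fC fB fA α` is the paper's `f_Ĉ`. -/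
def hatSymbol (fC : ℝ → ℝ) (fB : ℝ → ℂ) (fA : ℝ → ℝ) (α θ : ℝ) : ℝ :=
  fC θ + α * ‖fB θ‖ ^ 2 / a0 fA * (2 - α / a0 fA * fA θ)

section hatSymbol

variable {fC fA : ℝ → ℝ} {fB : ℝ → ℂ} {α : ℝ}

theorem lt_hatSymbol (hc : Continuous fA) (hp : Function.Periodic fA (2 * π)) (hα0 : 0 < α)
    (hα : α < 2 * a0 fA / supnorm fA) {θ : ℝ} (hθ : fB θ ≠ 0) : fC θ < hatSymbol fC fB fA α θ := by
  have := two_sub_div_a0_mul_pos hc hp hα0 hα θ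
  have := (a0_pos_and_supnorm_pos hα0 hα).1
  have := norm_pos_iff.2 hθ
  rw [hatSymbol, lt_add_iff_pos_right]
  positivity

theorem le_hatSymbol (hc : Continuous fA) (hp : Function.Periodic fA (2 * π)) (hα0 : 0 < α)
    (hα : α < 2 * a0 fA / supnorm fA) (θ : ℝ) : fC θ ≤ hatSymbol fC fB fA α θ := by
  have := two_sub_div_a0_mul_pos hc hp hα0 hα θ
  have := (a0_pos_and_supnorm_pos hα0 hα).1
  rw [hatSymbol, le_add_iff_nonneg_right]
  positivity

theorem AnalyticAt.hatSymbol {x : ℝ} (hfC : AnalyticAt ℝ fC x) (hfB : AnalyticAt ℝ fB x)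
    (hfA : AnalyticAt ℝ fA x) : AnalyticAt ℝ (hatSymbol fC fB fA α) x :=
  hfC.add (((analyticAt_const.mul hfB.norm_sq).div_const).mul
    (analyticAt_const.sub (analyticAt_const.mul hfA)))

end hatSymbol

/-- `coarseSymbol p f` is the real-valued form of `ψ(|p|² f)`. -/
def coarseSymbol (p : ℝ → ℂ) (f : ℝ → ℝ) (θ : ℝ) : ℝ :=
  1 / 2 * (‖p (θ / 2)‖ ^ 2 * f (θ / 2) + ‖p (θ / 2 + π)‖ ^ 2 * f (θ / 2 + π))

namespace coarseSymbol

variable {p : ℝ → ℂ} {f : ℝ → ℝ}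

theorem nonneg (hf : ∀ θ, 0 ≤ f θ) (θ : ℝ) : 0 ≤ coarseSymbol p f θ := by
  have := hf (θ / 2)
  have := hf (θ / 2 + π)
  unfold coarseSymbol
  positivity

theorem pos (hf : ∀ θ ∈ Ioo 0 (2 * π), 0 < f θ)
    (hp : ∀ θ, 0 < ‖p θ‖ ^ 2 + ‖p (θ + π)‖ ^ 2) {θ : ℝ} (hθ : θ ∈ Ioo 0 (2 * π)) :
    0 < coarseSymbol p f θ := by
  obtain ⟨hθ0, hθ2⟩ := hθ
  have ha := hf (θ / 2) ⟨by linarith, by linarith [Real.pi_pos]⟩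
  have hb := hf (θ / 2 + π) ⟨by linarith [Real.pi_pos], by linarith⟩
  have hm := lt_min ha hb
  unfold coarseSymbol
  nlinarith [hp (θ / 2), mul_le_mul_of_nonneg_left (min_le_left (f (θ / 2)) (f (θ / 2 + π)))
      (sq_nonneg ‖p (θ / 2)‖),
    mul_le_mul_of_nonneg_left (min_le_right (f (θ / 2)) (f (θ / 2 + π)))
      (sq_nonneg ‖p (θ / 2 + π)‖)]

theorem apply_zero (hf0 : f 0 = 0) (hpπ : p π = 0) : coarseSymbol p f 0 = 0 := by
  simp [coarseSymbol, hf0, hpπ]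

theorem periodic (hp : Function.Periodic p (2 * π)) (hf : Function.Periodic f (2 * π)) :
    Function.Periodic (coarseSymbol p f) (2 * π) := by
  intro θ
  have h₁ : (θ + 2 * π) / 2 = θ / 2 + π := by ring
  have h₂ : θ / 2 + π + π = θ / 2 + 2 * π := by ring
  simp only [coarseSymbol, h₁, h₂, hp (θ / 2), hf (θ / 2)]
  ring

theorem continuous (hp : Continuous p) (hf : Continuous f) : Continuous (coarseSymbol p f) := by
  unfold coarseSymbol
  fun_prop

end coarseSymbol

section

variable {p : ℝ → ℂ} {f : ℝ → ℝ}

theorem isBigO_comp_half_coarseSymbol (hf : ∀ θ, 0 ≤ f θ) (hp : ContinuousAt p 0) (hp0 : p 0 ≠ 0) :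
    (fun θ => f (θ / 2)) =O[𝓝 0] coarseSymbol p f := by
  have hlim : Tendsto (fun θ : ℝ => ‖p (θ / 2)‖ ^ 2) (𝓝 0) (𝓝 (‖p 0‖ ^ 2)) :=
    ((hp.norm.pow 2).tendsto).comp ((continuous_id.div_const 2).tendsto' 0 0 (zero_div 2))
  have hp0' : 0 < ‖p 0‖ ^ 2 := by positivity
  refine IsBigO.of_bound (2 / (‖p 0‖ ^ 2 / 2)) ?_
  filter_upwards [hlim.eventually_const_le (half_lt_self hp0')] with θ hθ
  rw [Real.norm_of_nonneg (hf _), Real.norm_of_nonneg (coarseSymbol.nonneg hf θ),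
    div_mul_eq_mul_div, le_div_iff₀ (by positivity)]
  have := mul_le_mul_of_nonneg_right hθ (hf (θ / 2))
  have := hf (θ / 2 + π)
  unfold coarseSymbol
  nlinarith [sq_nonneg ‖p (θ / 2 + π)‖]

theorem coarseSymbol_isBigO_comp_half (hp : Continuous p) (hf : Continuous f)
    (hpf : (fun θ => ‖p (θ + π)‖ ^ 2) =O[𝓝[≠] 0] f) :
    coarseSymbol p f =O[𝓝[≠] 0] fun θ => f (θ / 2) := by
  have hhalf := tendsto_div_const_nhdsNE_zero (two_ne_zero' ℝ)
  have h₁ : (fun θ => ‖p (θ / 2)‖ ^ 2) =O[𝓝[≠] 0] fun _ => (1 : ℝ) :=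
    ((hp.norm.pow 2).comp (continuous_id.div_const 2)).continuousAt.isBigO.mono nhdsWithin_le_nhds
  have h₂ : (fun θ => f (θ / 2 + π)) =O[𝓝[≠] 0] fun _ => (1 : ℝ) :=
    (hf.comp ((continuous_id.div_const 2).add continuous_const)).continuousAt.isBigO.mono
      nhdsWithin_le_nhds
  have hA : (fun θ => ‖p (θ / 2)‖ ^ 2 * f (θ / 2)) =O[𝓝[≠] 0] fun θ => f (θ / 2) := by
    simpa using h₁.mul (isBigO_refl (fun θ => f (θ / 2)) _)
  have hB : (fun θ => ‖p (θ / 2 + π)‖ ^ 2 * f (θ / 2 + π)) =O[𝓝[≠] 0] fun θ => f (θ / 2) := by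
    simpa using (hpf.comp_tendsto hhalf).mul h₂
  exact (hA.add hB).const_mul_left (1 / 2)

theorem isBigO_coarseSymbol_of_ne_zero (hf_an : AnalyticAt ℝ f 0) (hf0 : ∃ᶠ θ in 𝓝[≠] 0, f θ ≠ 0)
    (hf : ∀ θ, 0 ≤ f θ) (hp : ContinuousAt p 0) (hp0 : p 0 ≠ 0) :
    f =O[𝓝[≠] 0] coarseSymbol p f :=
  (hf_an.isTheta_comp_div hf0 two_ne_zero).isBigO.trans
    ((isBigO_comp_half_coarseSymbol hf hp hp0).mono nhdsWithin_le_nhds)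

theorem isTheta_coarseSymbol (hp : Continuous p) (hf : Continuous f) (hf_an : AnalyticAt ℝ f 0)
    (hf0 : ∃ᶠ θ in 𝓝[≠] 0, f θ ≠ 0) (hfnn : ∀ θ, 0 ≤ f θ)
    (hpf : (fun θ => ‖p (θ + π)‖ ^ 2) =O[𝓝[≠] 0] f) (hp0 : p 0 ≠ 0) :
    f =Θ[𝓝[≠] 0] coarseSymbol p f :=
  ⟨isBigO_coarseSymbol_of_ne_zero hf_an hf0 hfnn hp.continuousAt hp0,
    (coarseSymbol_isBigO_comp_half hp hf hpf).trans
      (hf_an.isTheta_comp_div hf0 two_ne_zero).symm.isBigO⟩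

theorem isBigO_coarseSymbol (hp : Continuous p) (hf : Continuous f) (hf_an : AnalyticAt ℝ f 0)
    (hf0 : ∃ᶠ θ in 𝓝[≠] 0, f θ ≠ 0) (hfnn : ∀ θ, 0 ≤ f θ)
    (hp2 : 0 < ‖p 0‖ ^ 2 + ‖p π‖ ^ 2) (hfπ : 0 < f π) :
    f =O[𝓝[≠] 0] coarseSymbol p f := by
  by_cases hp0 : p 0 = 0
  · have hpπ : 0 < ‖p π‖ ^ 2 := by simpa [hp0] using hp2
    have h0 : coarseSymbol p f 0 = 1 / 2 * (‖p π‖ ^ 2 * f π) := by simp [coarseSymbol, hp0]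
    exact (hf.continuousAt.isBigO_of_ne_zero (coarseSymbol.continuous hp hf).continuousAt
      (by rw [h0]; positivity)).mono nhdsWithin_le_nhds
  · exact isBigO_coarseSymbol_of_ne_zero hf_an hf0 hfnn hp.continuousAt hp0

end

theorem stmt11_general (fA fC : ℝ → ℝ) (fB pA pC : ℝ → ℂ) (α : ℝ)
    (hfA : ∃ z, IsTrigPolyDeg z (fun θ => (fA θ : ℂ)))
    (hfAnn : ∀ θ : ℝ, 0 ≤ fA θ)
    (hfA0 : fA 0 = 0)
    (hfApos : ∀ θ ∈ Set.Ioo (0 : ℝ) (2 * Real.pi), 0 < fA θ)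
    (hfC : ∃ z, IsTrigPolyDeg z (fun θ => (fC θ : ℂ)))
    (hfCnn : ∀ θ : ℝ, 0 ≤ fC θ)
    (hfB : ∃ z, IsTrigPolyDeg z fB)
    (hfBne : ∀ θ ∈ Set.Ioo (0 : ℝ) (2 * Real.pi), fB θ ≠ 0)
    (hα0 : 0 < α) (hα : α < 2 * a0 fA / supnorm fA)
    (hpA : ∃ z, IsTrigPolyDeg z pA) (hpC : ∃ z, IsTrigPolyDeg z pC)
    (h1 : ∀ θ : ℝ, 0 < ‖pA θ‖ ^ 2 + ‖pA (θ + Real.pi)‖ ^ 2)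
    (h2 : ∀ θ : ℝ, 0 < ‖pC θ‖ ^ 2 + ‖pC (θ + Real.pi)‖ ^ 2)
    (hpA2 : Filter.IsBoundedUnder (· ≤ ·) (𝓝[≠] (0 : ℝ))
      (fun θ => ‖pA (θ + Real.pi)‖ ^ 2 / fA θ))
    (fA' fChat fC' : ℝ → ℝ) (fB' : ℝ → ℂ)
    (hfA' : ∀ θ : ℝ, fA' θ = (1 / 2) *
      (‖pA (θ / 2)‖ ^ 2 * fA (θ / 2) + ‖pA (θ / 2 + Real.pi)‖ ^ 2 * fA (θ / 2 + Real.pi)))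
    (hfChat : ∀ θ : ℝ, fChat θ =
      fC θ + α * ‖fB θ‖ ^ 2 / a0 fA * (2 - α / a0 fA * fA θ))
    (hfC' : ∀ θ : ℝ, fC' θ = (1 / 2) *
      (‖pC (θ / 2)‖ ^ 2 * fChat (θ / 2) + ‖pC (θ / 2 + Real.pi)‖ ^ 2 * fChat (θ / 2 + Real.pi))) :
    (fA' 0 = 0 ∧ ∀ θ ∈ Set.Ioo (0 : ℝ) (2 * Real.pi), 0 < fA' θ) ∧
      (∃ c : ℝ, 0 < c ∧
        Filter.limsup (fun θ => fA θ / fA' θ) (𝓝[≠] (0 : ℝ)) = c ∧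
        Filter.IsBoundedUnder (· ≤ ·) (𝓝[≠] (0 : ℝ)) (fun θ => fA θ / fA' θ)) ∧
      (∀ θ : ℝ, 0 ≤ fC' θ) ∧
      (∀ α' : ℝ, 0 < α' → α' < 2 * a0 fA' / supnorm fA' →
        Filter.IsBoundedUnder (· ≤ ·) (𝓝[≠] (0 : ℝ)) (fun θ =>
          fChat θ / (fC' θ + α' * ‖fB' θ‖ ^ 2 / a0 fA' * (2 - α' / a0 fA' * fA' θ)))) := by
  obtain ⟨_, hfA⟩ := hfA
  obtain ⟨_, hfC⟩ := hfC
  obtain ⟨_, hfB⟩ := hfB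
  obtain ⟨_, hpA⟩ := hpA
  obtain ⟨_, hpC⟩ := hpC
  have hfA_cont : Continuous fA := Complex.continuous_re.comp hfA.continuous
  have hfA_per : Function.Periodic fA (2 * π) := fun θ => congrArg Complex.re (hfA.periodic θ)
  have hfA_pos := hfA_per.eventually_nhdsNE_zero Real.two_pi_pos hfApos
  have hpA_bigO := isBigO_of_isBoundedUnder_le_div (.of_forall fun _ => by positivity) hfA_pos hpA2
  have hpAπ : pA π = 0 := by
    simpa using ((hpA.continuous.comp (continuous_add_const π)).norm.pow 2).continuousAt
      |>.eq_zero_of_isBigO hfA_cont.continuousAt hfA0 hpA_bigO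
  have hpA0 : pA 0 ≠ 0 := by simpa [hpAπ] using (h1 0).ne'
  obtain rfl : fA' = coarseSymbol pA fA := funext hfA'
  obtain rfl : fC' = coarseSymbol pC fChat := funext hfC'
  obtain rfl : fChat = hatSymbol fC fB fA α := funext hfChat
  have hfA'_pos θ (hθ : θ ∈ Ioo 0 (2 * π)) := coarseSymbol.pos hfApos h1 hθ
  have hfChat_pos {θ} (hθ : fB θ ≠ 0) : 0 < hatSymbol fC fB fA α θ :=
    (hfCnn θ).trans_lt (lt_hatSymbol hfA_cont hfA_per hα0 hα hθ)
  have hfChat_nn θ : 0 ≤ hatSymbol fC fB fA α θ :=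
    (hfCnn θ).trans (le_hatSymbol hfA_cont hfA_per hα0 hα θ)
  have hfChat_an x : AnalyticAt ℝ (hatSymbol fC fB fA α) x :=
    (hfC.analyticAt_re x).hatSymbol (hfB.analyticAt x) (hfA.analyticAt_re x)
  refine ⟨⟨coarseSymbol.apply_zero hfA0 hpAπ, hfA'_pos⟩, ?_, coarseSymbol.nonneg hfChat_nn,
    fun α' hα'0 hα' => ?_⟩
  · exact exists_pos_limsup_div_of_isTheta (.of_forall hfAnn)
      ((coarseSymbol.periodic hpA.periodic hfA_per).eventually_nhdsNE_zero Real.two_pi_pos hfA'_pos)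
      (isTheta_coarseSymbol hpA.continuous hfA_cont (hfA.analyticAt_re 0)
        (hfA_pos.mono fun _ h => h.ne').frequently hfAnn hpA_bigO hpA0)
  · have hfChat_ne : ∃ᶠ θ in 𝓝[≠] 0, hatSymbol fC fB fA α θ ≠ 0 :=
      ((hfB.periodic.eventually_nhdsNE_zero (P := (· ≠ 0)) Real.two_pi_pos hfBne).mono
        fun θ hθ => (hfChat_pos hθ).ne').frequently
    have hfChat_π := hfChat_pos (hfBne π ⟨Real.pi_pos, by linarith [Real.pi_pos]⟩)
    exact isBoundedUnder_le_div_of_isBigO_of_le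
      (isBigO_coarseSymbol hpC.continuous (AnalyticOnNhd.continuous fun x _ => hfChat_an x)
        (hfChat_an 0) hfChat_ne hfChat_nn (by simpa using h2 0) hfChat_π)
      (coarseSymbol.nonneg hfChat_nn)
      (le_hatSymbol (coarseSymbol.continuous hpA.continuous hfA_cont)
        (coarseSymbol.periodic hpA.periodic hfA_per) hα'0 hα')

/-- properties of the coarse symbols `f_A'`, `f_C'` and `f_Ĉ'`
(Lemma A.2 in the paper). -/
theorem stmt11 (fA fC : ℝ → ℝ) (fB pA pC : ℝ → ℂ) (α : ℝ)
    (hfA : ∃ z, IsTrigPolyDeg z (fun θ => (fA θ : ℂ)))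
    (hfAnn : ∀ θ : ℝ, 0 ≤ fA θ)
    (hfA0 : fA 0 = 0)
    (hfApos : ∀ θ ∈ Set.Ioo (0 : ℝ) (2 * Real.pi), 0 < fA θ)
    (hfC : ∃ z, IsTrigPolyDeg z (fun θ => (fC θ : ℂ)))
    (hfCnn : ∀ θ : ℝ, 0 ≤ fC θ)
    (hfB : ∃ z, IsTrigPolyDeg z fB)
    (hfB0 : fB 0 = 0)
    (hfBne : ∀ θ ∈ Set.Ioo (0 : ℝ) (2 * Real.pi), fB θ ≠ 0)
    (hfBA : Filter.IsBoundedUnder (· ≤ ·) (𝓝[≠] (0 : ℝ)) (fun θ => ‖fB θ‖ ^ 2 / fA θ))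
    (hα0 : 0 < α) (hα : α < 2 * a0 fA / supnorm fA)
    (hpA : ∃ z, IsTrigPolyDeg z pA) (hpC : ∃ z, IsTrigPolyDeg z pC)
    (h1 : ∀ θ : ℝ, 0 < ‖pA θ‖ ^ 2 + ‖pA (θ + Real.pi)‖ ^ 2)
    (h2 : ∀ θ : ℝ, 0 < ‖pC θ‖ ^ 2 + ‖pC (θ + Real.pi)‖ ^ 2)
    (hpA2 : Filter.IsBoundedUnder (· ≤ ·) (𝓝[≠] (0 : ℝ))
      (fun θ => ‖pA (θ + Real.pi)‖ ^ 2 / fA θ))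
    (fA' fChat fC' : ℝ → ℝ) (fB' : ℝ → ℂ)
    (hfA' : ∀ θ : ℝ, fA' θ = (1 / 2) *
      (‖pA (θ / 2)‖ ^ 2 * fA (θ / 2) + ‖pA (θ / 2 + Real.pi)‖ ^ 2 * fA (θ / 2 + Real.pi)))
    (hfChat : ∀ θ : ℝ, fChat θ =
      fC θ + α * ‖fB θ‖ ^ 2 / a0 fA * (2 - α / a0 fA * fA θ))
    (hfC' : ∀ θ : ℝ, fC' θ = (1 / 2) *
      (‖pC (θ / 2)‖ ^ 2 * fChat (θ / 2) + ‖pC (θ / 2 + Real.pi)‖ ^ 2 * fChat (θ / 2 + Real.pi)))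
    (hfB' : ∀ θ : ℝ, fB' θ = (1 / 2) *
      ((starRingEnd ℂ) (pC (θ / 2)) * fB (θ / 2) *
          (1 - ((α / a0 fA * fA (θ / 2) : ℝ) : ℂ)) * pA (θ / 2) +
        (starRingEnd ℂ) (pC (θ / 2 + Real.pi)) * fB (θ / 2 + Real.pi) *
          (1 - ((α / a0 fA * fA (θ / 2 + Real.pi) : ℝ) : ℂ)) * pA (θ / 2 + Real.pi))) :
    (fA' 0 = 0 ∧ ∀ θ ∈ Set.Ioo (0 : ℝ) (2 * Real.pi), 0 < fA' θ) ∧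
      (∃ c : ℝ, 0 < c ∧
        Filter.limsup (fun θ => fA θ / fA' θ) (𝓝[≠] (0 : ℝ)) = c ∧
        Filter.IsBoundedUnder (· ≤ ·) (𝓝[≠] (0 : ℝ)) (fun θ => fA θ / fA' θ)) ∧
      (∀ θ : ℝ, 0 ≤ fC' θ) ∧
      (∀ α' : ℝ, 0 < α' → α' < 2 * a0 fA' / supnorm fA' →
        Filter.IsBoundedUnder (· ≤ ·) (𝓝[≠] (0 : ℝ)) (fun θ =>
          fChat θ / (fC' θ + α' * ‖fB' θ‖ ^ 2 / a0 fA' * (2 - α' / a0 fA' * fA' θ)))) :=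
  stmt11_general fA fC fB pA pC α hfA hfAnn hfA0 hfApos hfC hfCnn hfB hfBne hα0 hα hpA hpC h1 h2
    hpA2 fA' fChat fC' fB' hfA' hfChat hfC'
end
end
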